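/- arXiv:2408.12096 — 7 statements merged into one kernel-verified Lean document; each statement's English description precedes it below -/
import Mathlib

section
/- For every integer n ≥ 1, if S(n) = Σ_{k=1}^{n} (-1)^{k-1}/(2k-1) denotes the n-th partial sum of the Mādhava–Leibniz series, then |π/4 - (S(n) + (-1)^n · 1/(4n))| ≤ 1/n^3. -/
open Real Finset intervalIntegral

noncomputable def madI (n : ℕ) : ℝ := ∫ x in (0:ℝ)..1, x ^ (2*n) / (1 + x^2)

lemma madCont (n : ℕ) : Continuous fun x : ℝ => x ^ n / (1 + x^2) := by
  apply Continuous.div (continuous_pow _) (by continuity)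
  intro x; positivity

lemma madI_rec (n : ℕ) : madI n + madI (n+1) = 1 / (2*(n:ℝ)+1) := by
  have h1 : madI n + madI (n+1) = ∫ x in (0:ℝ)..1, x ^ (2*n) := by
    rw [madI, madI, ← intervalIntegral.integral_add ((madCont (2*n)).intervalIntegrable _ _)
      ((madCont (2*(n+1))).intervalIntegrable _ _)]
    apply intervalIntegral.integral_congr
    intro x _
    have hx : (1 : ℝ) + x^2 ≠ 0 := by positivity
    field_simp
    ring
  rw [h1, integral_pow]
  push_cast
  norm_num

lemma madI_eq (n : ℕ) :
    π / 4 - (∑ k ∈ Finset.Icc 1 n, (-1 : ℝ) ^ (k - 1) / (2 * (k : ℝ) - 1))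
      = (-1 : ℝ) ^ n * madI n := by
  induction n with
  | zero =>
      simp only [Finset.Icc_self, pow_zero, one_mul]
      rw [show Finset.Icc 1 0 = (∅ : Finset ℕ) by decide]
      simp only [Finset.sum_empty, sub_zero]
      rw [madI]
      have : (∫ x in (0:ℝ)..1, x ^ (2*0) / (1 + x^2)) = ∫ x in (0:ℝ)..1, 1 / (1 + x^2) := by
        apply intervalIntegral.integral_congr; intro x _; norm_num
      rw [this, integral_one_div_one_add_sq, arctan_one, arctan_zero]
      ring
  | succ n ih =>
      rw [Finset.sum_Icc_succ_top (by omega : 1 ≤ n + 1)]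
      have hrec := madI_rec n
      have : madI (n+1) = 1 / (2*(n:ℝ)+1) - madI n := by linarith
      rw [this]
      have hterm : ((-1 : ℝ)) ^ (n + 1 - 1) / (2 * ((n+1 : ℕ) : ℝ) - 1)
          = (-1 : ℝ) ^ n / (2*(n:ℝ)+1) := by
        push_cast; ring_nf
      rw [hterm]
      linear_combination ih

lemma madI_le (m : ℕ) : madI (m+1) ≤ 1 / (4 * ((m:ℝ)+1)) := by
  have h : madI (m+1) ≤ ∫ x in (0:ℝ)..1, x ^ (2*m+1) / 2 := by
    rw [madI]
    apply intervalIntegral.integral_mono_on (by norm_num)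
      ((madCont (2*(m+1))).intervalIntegrable _ _)
      (((continuous_pow _).div_const 2).intervalIntegrable _ _)
    intro x hx
    obtain ⟨hx0, hx1⟩ := hx
    rw [div_le_div_iff₀ (by positivity) (by norm_num)]
    have h1 : x ^ (2*(m+1)) = x ^ (2*m+1) * x := by ring
    have h2 : (0:ℝ) ≤ x ^ (2*m+1) := pow_nonneg hx0 _
    nlinarith [mul_nonneg h2 (sq_nonneg (1 - x))]
  calc madI (m+1) ≤ ∫ x in (0:ℝ)..1, x ^ (2*m+1) / 2 := h
    _ = 1 / (4 * ((m:ℝ)+1)) := by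
        rw [intervalIntegral.integral_div, integral_pow]
        push_cast; field_simp; ring

lemma madI_ge (n : ℕ) : 1 / (2*(n:ℝ)+1) - 1 / (4*(n:ℝ)+4) ≤ madI n := by
  have h : (∫ x in (0:ℝ)..1, x ^ (2*n) - x ^ (2*n+1) / 2) ≤ madI n := by
    rw [madI]
    apply intervalIntegral.integral_mono_on (by norm_num)
      (((continuous_pow _).sub ((continuous_pow _).div_const 2)).intervalIntegrable _ _)
      ((madCont (2*n)).intervalIntegrable _ _)
    intro x hx
    obtain ⟨hx0, hx1⟩ := hx
    rw [le_div_iff₀ (by positivity : (0:ℝ) < 1 + x^2)]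
    simp only [Pi.sub_apply]
    nlinarith [mul_nonneg (mul_nonneg (pow_nonneg hx0 (2*n)) hx0) (sq_nonneg (1 - x)),
      (show x ^ (2*n+1) = x ^ (2*n) * x by ring)]
  calc 1 / (2*(n:ℝ)+1) - 1 / (4*(n:ℝ)+4)
      = ∫ x in (0:ℝ)..1, x ^ (2*n) - x ^ (2*n+1) / 2 := by
        rw [intervalIntegral.integral_sub ((continuous_pow _).intervalIntegrable _ _)
          (((continuous_pow _).div_const 2).intervalIntegrable _ _),
          intervalIntegral.integral_div, integral_pow, integral_pow]
        push_cast
        have h1 : (2*(n:ℝ)+1) ≠ 0 := by positivity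
        have h2 : (4*(n:ℝ)+4) ≠ 0 := by positivity
        field_simp
        ring
    _ ≤ madI n := h

/-- Mādhava's first end-correction term for the Mādhava–Leibniz series:
for n ≥ 1, |π/4 - (S(n) + (-1)^n · 1/(4n))| ≤ 1/n³, where
S(n) = ∑_{k=1}^{n} (-1)^{k-1}/(2k-1). -/
theorem madhava_first_correction (n : ℕ) (hn : 1 ≤ n) :
    |π / 4 - ((∑ k ∈ Finset.Icc 1 n, (-1 : ℝ) ^ (k - 1) / (2 * (k : ℝ) - 1)) +
      (-1 : ℝ) ^ n * (1 / (4 * (n : ℝ))))| ≤ 1 / (n : ℝ) ^ 3 := by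
  obtain ⟨m, rfl⟩ : ∃ m, n = m + 1 := ⟨n - 1, by omega⟩
  set N : ℝ := (m : ℝ) + 1 with hNdef
  have hNcast : (((m+1 : ℕ)) : ℝ) = N := by push_cast; ring
  have hN1 : (1:ℝ) ≤ N := by have := Nat.cast_nonneg (α := ℝ) m; simp only [hNdef]; linarith
  have hN0 : (0:ℝ) < N := by linarith
  have heq := madI_eq (m+1)
  have hle := madI_le m
  have hge := madI_ge (m+1)
  rw [hNcast]
  rw [show ((m:ℝ)+1) = N from rfl] at hle
  rw [hNcast] at hge
  have hrw : π / 4 - ((∑ k ∈ Finset.Icc 1 (m+1), (-1 : ℝ) ^ (k - 1) / (2 * (k : ℝ) - 1)) +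
      (-1 : ℝ) ^ (m+1) * (1 / (4 * N))) = (-1:ℝ)^(m+1) * (madI (m+1) - 1/(4*N)) := by
    rw [mul_sub]
    rw [← heq]
    ring
  rw [hrw, abs_mul, abs_pow, abs_neg, abs_one, one_pow, one_mul,
    abs_of_nonpos (by linarith)]
  have hfrac : 1/(4*N) + 1/(4*N+4) - 1/(2*N+1) = 1/(4*N*(N+1)*(2*N+1)) := by
    field_simp
    ring
  have hkey : 1/(4*N*(N+1)*(2*N+1)) ≤ 1/N^3 := by
    apply one_div_le_one_div_of_le (by positivity)
    nlinarith [mul_pos hN0 hN0, mul_pos (mul_pos hN0 hN0) hN0]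
  linarith
end

section
/- For every integer n ≥ 1, if S(n) = Σ_{k=1}^{n} (-1)^{k-1}/(2k-1) denotes the n-th partial sum of the Mādhava–Leibniz series, then |π/4 - (S(n) + (-1)^n · n/(4n^2+1))| ≤ 1/n^5. -/
open Real Finset

private noncomputable def mP (m : ℕ) : ℝ := ∑ i ∈ Finset.range m, (-1 : ℝ) ^ i / (2 * i + 1)

private noncomputable def mG (m : ℕ) : ℝ := (m : ℝ) / (4 * (m : ℝ) ^ 2 + 1)

private noncomputable def mF (m : ℕ) : ℝ := (-1 : ℝ) ^ m * (π / 4 - mP m) - mG m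

private noncomputable def mD (m : ℕ) : ℝ :=
  4 / ((2 * (m : ℝ) + 1) * (4 * (m : ℝ) ^ 2 + 1) * (4 * (m : ℝ) ^ 2 + 8 * m + 5))

private lemma mD_pos (m : ℕ) : 0 < mD m := by
  have h : (0:ℝ) ≤ (m:ℝ) := Nat.cast_nonneg m
  unfold mD
  positivity

private lemma mF_rec (m : ℕ) : mF m + mF (m + 1) = mD m := by
  have hP : mP (m + 1) = mP m + (-1 : ℝ) ^ m / (2 * m + 1) := by
    unfold mP
    rw [Finset.sum_range_succ]
  have h1 : (0:ℝ) < 2 * (m:ℝ) + 1 := by positivity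
  have h2 : (0:ℝ) < 4 * (m:ℝ) ^ 2 + 1 := by positivity
  have h3 : (0:ℝ) < 4 * (m:ℝ) ^ 2 + 8 * m + 5 := by positivity
  unfold mF mG mD
  rcases neg_one_pow_eq_or ℝ m with he | he
  · rw [hP, pow_succ (-1:ℝ) m, he]
    push_cast
    field_simp
    ring
  · rw [hP, pow_succ (-1:ℝ) m, he]
    push_cast
    field_simp
    ring

private lemma mF_partial (n : ℕ) : ∀ m : ℕ,
    (∑ i ∈ Finset.range m, (-1 : ℝ) ^ i * mD (n + i)) = mF n - (-1 : ℝ) ^ m * mF (n + m) := by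
  intro m
  induction m with
  | zero => simp
  | succ m ih =>
    rw [Finset.sum_range_succ, ih]
    have := mF_rec (n + m)
    have hnm : n + (m + 1) = (n + m) + 1 := by ring
    rw [hnm]
    have hs : mF ((n+m)+1) = mD (n+m) - mF (n+m) := by linarith
    rw [hs, pow_succ]
    ring

private lemma mG_tendsto : Filter.Tendsto mG Filter.atTop (nhds 0) := by
  have h : ∀ m : ℕ, 1 ≤ m → |mG m| ≤ 1 / (m : ℝ) := by
    intro m hm
    have hm' : (1:ℝ) ≤ (m:ℝ) := by exact_mod_cast hm
    have hpos : (0:ℝ) < m := by linarith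
    have hGpos : 0 ≤ mG m := by unfold mG; positivity
    rw [abs_of_nonneg hGpos]
    unfold mG
    rw [div_le_div_iff₀ (by positivity) hpos]
    nlinarith
  have h0 : Filter.Tendsto (fun m : ℕ => 1 / (m : ℝ)) Filter.atTop (nhds 0) := by
    exact tendsto_one_div_atTop_nhds_zero_nat
  apply squeeze_zero_norm' _ h0
  filter_upwards [Filter.eventually_ge_atTop 1] with m hm
  simpa [Real.norm_eq_abs] using h m hm

private lemma mF_tendsto : Filter.Tendsto mF Filter.atTop (nhds 0) := by
  have hP : Filter.Tendsto (fun m => π / 4 - mP m) Filter.atTop (nhds 0) := by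
    have := Real.tendsto_sum_pi_div_four
    have h2 : Filter.Tendsto (fun m => π / 4 - mP m) Filter.atTop (nhds (π/4 - π/4)) :=
      Filter.Tendsto.sub tendsto_const_nhds this
    simpa using h2
  have hPa : Filter.Tendsto (fun m => (-1:ℝ) ^ m * (π / 4 - mP m)) Filter.atTop (nhds 0) := by
    apply squeeze_zero_norm _ (by simpa [Real.norm_eq_abs] using hP.abs)
    intro m
    rw [norm_mul, norm_pow, norm_neg, norm_one, one_pow, one_mul, Real.norm_eq_abs]
  have := hPa.sub mG_tendsto
  rw [sub_zero] at this
  exact this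

private lemma mD_antitone (n : ℕ) : Antitone (fun i => mD (n + i)) := by
  apply antitone_nat_of_succ_le
  intro m
  have h : ∀ a b : ℕ, a ≤ b → mD b ≤ mD a := by
    intro a b hab
    have hab' : (a:ℝ) ≤ (b:ℝ) := by exact_mod_cast hab
    have ha : (0:ℝ) ≤ (a:ℝ) := Nat.cast_nonneg a
    unfold mD
    have hb : (0:ℝ) ≤ (b:ℝ) := Nat.cast_nonneg b
    gcongr 4 / ?_
    have e1 : 2*(a:ℝ)+1 ≤ 2*(b:ℝ)+1 := by linarith
    have e2 : 4*(a:ℝ)^2+1 ≤ 4*(b:ℝ)^2+1 := by nlinarith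
    have e3 : 4*(a:ℝ)^2+8*(a:ℝ)+5 ≤ 4*(b:ℝ)^2+8*(b:ℝ)+5 := by nlinarith
    have := mul_le_mul (mul_le_mul e1 e2 (by positivity) (by positivity)) e3 (by positivity)
      (by positivity)
    convert this using 2 <;> ring
  exact h (n + m) (n + (m+1)) (by omega)

private lemma mF_bounds (n : ℕ) : 0 ≤ mF n ∧ mF n ≤ mD n := by
  have h1 : Filter.Tendsto (fun m => (-1:ℝ) ^ m * mF (n + m)) Filter.atTop (nhds 0) := by
    have habs : Filter.Tendsto (fun m => |mF (n + m)|) Filter.atTop (nhds 0) := by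
      have hcomp : Filter.Tendsto (fun m => mF (n + m)) Filter.atTop (nhds 0) := by
        apply mF_tendsto.comp
        exact Filter.Tendsto.congr (fun m => Nat.add_comm m n) (Filter.tendsto_add_atTop_nat n)
      simpa using hcomp.abs
    apply squeeze_zero_norm _ habs
    intro m
    rw [norm_mul, norm_pow, norm_neg, norm_one, one_pow, one_mul, Real.norm_eq_abs]
  have hlim : Filter.Tendsto (fun m => ∑ i ∈ Finset.range m, (-1 : ℝ) ^ i * mD (n + i))
      Filter.atTop (nhds (mF n)) := by
    have h2 : Filter.Tendsto (fun m => mF n - (-1:ℝ) ^ m * mF (n + m)) Filter.atTop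
        (nhds (mF n - 0)) := Filter.Tendsto.sub tendsto_const_nhds h1
    simp only [sub_zero] at h2
    refine h2.congr' ?_
    filter_upwards with m
    exact (mF_partial n m).symm
  constructor
  · have := (mD_antitone n).alternating_series_le_tendsto hlim 0
    simpa using this
  · have := (mD_antitone n).tendsto_le_alternating_series hlim 0
    simpa using this

private lemma sum_eq_mP (n : ℕ) :
    (∑ k ∈ Finset.Icc 1 n, (-1 : ℝ) ^ (k - 1) / (2 * (k : ℝ) - 1)) = mP n := by
  induction n with
  | zero => simp [mP]
  | succ n ih =>
    rw [Finset.sum_Icc_succ_top (by omega : 1 ≤ n + 1), ih]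
    unfold mP
    rw [Finset.sum_range_succ]
    congr 1
    push_cast
    ring_nf

/-- Mādhava's second end-correction term for the Mādhava–Leibniz series:
for n ≥ 1, |π/4 - (S(n) + (-1)^n · n/(4n²+1))| ≤ 1/n⁵, where
S(n) = ∑_{k=1}^{n} (-1)^{k-1}/(2k-1). -/
theorem madhava_second_correction (n : ℕ) (hn : 1 ≤ n) :
    |π / 4 - ((∑ k ∈ Finset.Icc 1 n, (-1 : ℝ) ^ (k - 1) / (2 * (k : ℝ) - 1)) +
      (-1 : ℝ) ^ n * ((n : ℝ) / (4 * (n : ℝ) ^ 2 + 1)))| ≤ 1 / (n : ℝ) ^ 5 := by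
  rw [sum_eq_mP]
  have key : π / 4 - (mP n + (-1 : ℝ) ^ n * ((n : ℝ) / (4 * (n : ℝ) ^ 2 + 1)))
      = (-1 : ℝ) ^ n * mF n := by
    unfold mF mG
    rcases neg_one_pow_eq_or ℝ n with he | he <;> rw [he] <;> ring
  rw [key, abs_mul, abs_pow, abs_neg, abs_one, one_pow, one_mul]
  obtain ⟨h0, h1⟩ := mF_bounds n
  rw [abs_of_nonneg h0]
  refine h1.trans ?_
  have hn' : (1:ℝ) ≤ (n:ℝ) := by exact_mod_cast hn
  unfold mD
  rw [div_le_div_iff₀ (by positivity) (by positivity)]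
  nlinarith [pow_nonneg (by linarith : (0:ℝ) ≤ (n:ℝ)) 5,
    pow_nonneg (by linarith : (0:ℝ) ≤ (n:ℝ)) 4,
    pow_nonneg (by linarith : (0:ℝ) ≤ (n:ℝ)) 3,
    pow_nonneg (by linarith : (0:ℝ) ≤ (n:ℝ)) 2,
    (by linarith : (0:ℝ) ≤ (n:ℝ))]
end

section
/- For every integer n ≥ 1, if S(n) = Σ_{k=1}^{n} (-1)^{k-1}/(2k-1) denotes the n-th partial sum of the Mādhava–Leibniz series, then |π/4 - (S(n) + (-1)^n · (n^2+1)/(n(4n^2+5)))| ≤ 1/n^7. -/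
open Real Finset Filter Topology

noncomputable def madhavaS (n : ℕ) : ℝ :=
  ∑ k ∈ Finset.Icc 1 n, (-1 : ℝ) ^ (k - 1) / (2 * (k : ℝ) - 1)

noncomputable def madhavaF (n : ℕ) : ℝ :=
  ((n : ℝ) ^ 2 + 1) / ((n : ℝ) * (4 * (n : ℝ) ^ 2 + 5))

noncomputable def madhavaE (n : ℕ) : ℝ :=
  π / 4 - (madhavaS n + (-1 : ℝ) ^ n * madhavaF n)

noncomputable def madhavaD (n : ℕ) : ℝ :=
  madhavaF n + madhavaF (n + 1) - 1 / (2 * (n : ℝ) + 1)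

lemma madhavaS_eq (n : ℕ) :
    madhavaS n = ∑ i ∈ Finset.range n, (-1 : ℝ) ^ i / (2 * (i : ℝ) + 1) := by
  induction n with
  | zero => simp [madhavaS]
  | succ m ih =>
    rw [madhavaS, Finset.sum_Icc_succ_top (by omega : 1 ≤ m + 1), ← madhavaS, ih,
      Finset.sum_range_succ]
    have : ((m + 1 : ℕ) : ℝ) = (m : ℝ) + 1 := by push_cast; ring
    rw [this]
    simp only [Nat.add_sub_cancel]
    congr 1
    ring

lemma madhavaS_tendsto : Tendsto madhavaS atTop (𝓝 (π / 4)) := by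
  have h := Real.tendsto_sum_pi_div_four
  exact h.congr fun n => (madhavaS_eq n).symm

lemma madhavaF_nonneg (n : ℕ) : 0 ≤ madhavaF n := by
  unfold madhavaF; positivity

lemma madhavaF_le (n : ℕ) : madhavaF n ≤ 1 / (n : ℝ) := by
  rcases Nat.eq_zero_or_pos n with h | h
  · simp [h, madhavaF]
  have hx : (1 : ℝ) ≤ (n : ℝ) := by exact_mod_cast h
  rw [madhavaF, div_le_div_iff₀ (by positivity) (by positivity)]
  nlinarith [sq_nonneg ((n : ℝ))]

lemma madhavaE_tendsto : Tendsto madhavaE atTop (𝓝 0) := by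
  have h1 : Tendsto (fun n : ℕ => (-1 : ℝ) ^ n * madhavaF n) atTop (𝓝 0) := by
    refine squeeze_zero_norm (fun n => ?_) tendsto_one_div_atTop_nhds_zero_nat
    rw [norm_mul, norm_pow, norm_neg, norm_one, one_pow, one_mul,
      Real.norm_eq_abs, abs_of_nonneg (madhavaF_nonneg n)]
    exact madhavaF_le n
  have h2 := (madhavaS_tendsto.add h1)
  have h3 := (tendsto_const_nhds (x := π / 4) (f := atTop (α := ℕ))).sub h2
  simp only [add_zero, sub_self] at h3
  exact h3

lemma madhavaD_eq (n : ℕ) (hn : 1 ≤ n) :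
    madhavaD n = 9 / ((n : ℝ) * ((n : ℝ) + 1) * (2 * (n : ℝ) + 1) *
      (4 * (n : ℝ) ^ 2 + 5) * (4 * ((n : ℝ) + 1) ^ 2 + 5)) := by
  have hx : (1 : ℝ) ≤ (n : ℝ) := by exact_mod_cast hn
  rw [madhavaD, madhavaF, madhavaF]
  push_cast
  rw [div_add_div _ _ (by positivity) (by positivity), div_sub_div _ _ (by positivity)
    (by positivity), div_eq_div_iff (by positivity) (by positivity)]
  ring

lemma madhavaD_pos (n : ℕ) (hn : 1 ≤ n) : 0 < madhavaD n := by
  have hx : (1 : ℝ) ≤ (n : ℝ) := by exact_mod_cast hn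
  rw [madhavaD_eq n hn]
  positivity

lemma madhavaD_antitone (n : ℕ) (hn : 1 ≤ n) : madhavaD (n + 1) ≤ madhavaD n := by
  have hx : (1 : ℝ) ≤ (n : ℝ) := by exact_mod_cast hn
  rw [madhavaD_eq n hn, madhavaD_eq (n + 1) (by omega)]
  push_cast
  gcongr <;> nlinarith

lemma madhavaD_le (n : ℕ) (hn : 1 ≤ n) : madhavaD n ≤ 1 / (n : ℝ) ^ 7 := by
  have hx : (1 : ℝ) ≤ (n : ℝ) := by exact_mod_cast hn
  have hx0 : (0:ℝ) < (n:ℝ) := by linarith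
  rw [madhavaD_eq n hn, div_le_div_iff₀ (by positivity) (by positivity)]
  calc 9 * (n:ℝ) ^ 7 ≤ 32 * (n:ℝ) ^ 7 := by nlinarith [pow_pos hx0 7]
    _ = (n:ℝ) * (n:ℝ) * (2 * (n:ℝ)) * (4 * (n:ℝ)^2) * (4 * (n:ℝ)^2) := by ring
    _ ≤ (n:ℝ) * ((n:ℝ) + 1) * (2 * (n:ℝ) + 1) * (4 * (n:ℝ) ^ 2 + 5) *
        (4 * ((n:ℝ) + 1) ^ 2 + 5) := by gcongr <;> nlinarith
    _ = 1 * ((n:ℝ) * ((n:ℝ) + 1) * (2 * (n:ℝ) + 1) * (4 * (n:ℝ) ^ 2 + 5) *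
        (4 * ((n:ℝ) + 1) ^ 2 + 5)) := by ring

lemma madhavaE_rec (n : ℕ) :
    madhavaE n = madhavaE (n + 1) + (-1 : ℝ) ^ (n + 1) * madhavaD n := by
  have hS : madhavaS (n + 1) = madhavaS n + (-1 : ℝ) ^ n / (2 * (n : ℝ) + 1) := by
    rw [madhavaS, Finset.sum_Icc_succ_top (by omega : 1 ≤ n + 1), ← madhavaS]
    have : ((n + 1 : ℕ) : ℝ) = (n : ℝ) + 1 := by push_cast; ring
    rw [this]
    simp only [Nat.add_sub_cancel]
    congr 1
    ring
  rw [madhavaE, madhavaE, madhavaD, hS, pow_succ]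
  ring

noncomputable def madhavaU (n : ℕ) : ℝ := (-1 : ℝ) ^ (n + 1) * madhavaE n

lemma madhavaU_add (n : ℕ) : madhavaU n + madhavaU (n + 1) = madhavaD n := by
  have hs : ((-1:ℝ)) ^ n * ((-1:ℝ)) ^ n = 1 := by
    rw [← pow_add]
    exact Even.neg_one_pow ⟨n, rfl⟩
  rw [madhavaU, madhavaU, madhavaE_rec n, pow_succ, pow_succ]
  linear_combination madhavaD n * hs

lemma madhavaU_nonneg (n : ℕ) (hn : 1 ≤ n) : 0 ≤ madhavaU n := by
  have key : ∀ m : ℕ, 1 ≤ m → madhavaU (m + 2) ≤ madhavaU m := by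
    intro m hm
    have h1 := madhavaU_add m
    have h2 := madhavaU_add (m + 1)
    have h3 := madhavaD_antitone m hm
    have : madhavaU (m + 1 + 1) = madhavaU (m + 2) := by norm_num
    linarith
  set w : ℕ → ℝ := fun k => madhavaU (n + 2 * k) with hw
  have hanti : Antitone w := by
    apply antitone_nat_of_succ_le
    intro k
    have := key (n + 2 * k) (by omega)
    simpa [hw, Nat.mul_succ, ← add_assoc] using this
  have htend : Tendsto w atTop (𝓝 0) := by
    have hnat : Tendsto (fun k : ℕ => n + 2 * k) atTop atTop := by
      apply tendsto_atTop_atTop.mpr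
      intro b
      exact ⟨b, fun a ha => by omega⟩
    have hE : Tendsto (fun k : ℕ => madhavaE (n + 2 * k)) atTop (𝓝 0) :=
      madhavaE_tendsto.comp hnat
    refine squeeze_zero_norm (f := w) (fun k => ?_) (tendsto_norm_zero.comp hE)
    simp [hw, madhavaU, abs_mul]
  have := hanti.le_of_tendsto htend 0
  simpa [hw] using this

lemma madhavaE_abs_le (n : ℕ) (hn : 1 ≤ n) : |madhavaE n| ≤ madhavaD n := by
  have h0 := madhavaU_nonneg n hn
  have h1 := madhavaU_nonneg (n + 1) (by omega)
  have h2 := madhavaU_add n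
  have habs : |madhavaE n| = |madhavaU n| := by
    rw [madhavaU, abs_mul, abs_pow, abs_neg, abs_one, one_pow, one_mul]
  rw [habs, abs_of_nonneg h0]
  linarith

/-- Mādhava's third end-correction term for the Mādhava–Leibniz series:
for n ≥ 1, |π/4 - (S(n) + (-1)^n · (n²+1)/(n(4n²+5)))| ≤ 1/n⁷, where
S(n) = ∑_{k=1}^{n} (-1)^{k-1}/(2k-1). -/
theorem madhava_third_correction (n : ℕ) (hn : 1 ≤ n) :
    |π / 4 - ((∑ k ∈ Finset.Icc 1 n, (-1 : ℝ) ^ (k - 1) / (2 * (k : ℝ) - 1)) +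
      (-1 : ℝ) ^ n * (((n : ℝ) ^ 2 + 1) / ((n : ℝ) * (4 * (n : ℝ) ^ 2 + 5))))| ≤
      1 / (n : ℝ) ^ 7 := by
  have h : π / 4 - ((∑ k ∈ Finset.Icc 1 n, (-1 : ℝ) ^ (k - 1) / (2 * (k : ℝ) - 1)) +
      (-1 : ℝ) ^ n * (((n : ℝ) ^ 2 + 1) / ((n : ℝ) * (4 * (n : ℝ) ^ 2 + 5)))) =
      madhavaE n := rfl
  rw [h]
  exact (madhavaE_abs_le n hn).trans (madhavaD_le n hn)
end

section
/- The sum over k ≥ 1 of (-1)^{k+1} / ((2k+1)^3 - (2k+1)) equals π/4 - 3/4; equivalently, π/4 = 3/4 + 1/(3^3-3) - 1/(5^3-5) + 1/(7^3-7) - .... -/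
open Real Filter Finset

lemma madhava_step (n : ℕ) :
    (-1 : ℝ) ^ ((n + 1) + 1) /
        ((2 * ((n : ℝ) + 1) + 1) ^ 3 - (2 * ((n : ℝ) + 1) + 1)) =
      ((-1 : ℝ) ^ n / (4 * ((n : ℝ) + 1)) - (-1 : ℝ) ^ (n + 1) / (4 * ((n : ℝ) + 2)))
        + (-1 : ℝ) ^ (n + 1) / (2 * ((n : ℝ) + 1) + 1) := by
  have h1 : ((n : ℝ) + 1) ≠ 0 := by positivity
  have h2 : ((n : ℝ) + 2) ≠ 0 := by positivity
  have h3 : (2 * ((n : ℝ) + 1) + 1) ≠ 0 := by positivity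
  have h0 : (2 * ((n : ℝ) + 1) + 1) ^ 3 - (2 * ((n : ℝ) + 1) + 1) ≠ 0 := by
    have : (0:ℝ) < (2 * ((n : ℝ) + 1) + 1) ^ 3 - (2 * ((n : ℝ) + 1) + 1) := by
      nlinarith [Nat.cast_nonneg (α := ℝ) n, pow_nonneg (Nat.cast_nonneg (α := ℝ) n) 3, sq_nonneg ((n:ℝ))]
    linarith
  have hpa : (-1 : ℝ) ^ (n + 1 + 1) = (-1)^n := by rw [pow_succ, pow_succ]; ring
  have hpb : (-1 : ℝ) ^ (n + 1) = -(-1)^n := by rw [pow_succ]; ring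
  rw [hpa, hpb]
  field_simp
  have h5 : (8 + (n:ℝ) * 12 + (n:ℝ) ^ 2 * 4) * (8 + (n:ℝ) * 12 + (n:ℝ) ^ 2 * 4)⁻¹ = 1 :=
    mul_inv_cancel₀ (by positivity)
  linear_combination h5

lemma madhava_partial (N : ℕ) :
    ∑ k ∈ Finset.range N, (-1 : ℝ) ^ ((k + 1) + 1) /
        ((2 * ((k : ℝ) + 1) + 1) ^ 3 - (2 * ((k : ℝ) + 1) + 1)) =
      1/4 - (-1 : ℝ) ^ N / (4 * (N + 1)) - 1 +
        ∑ i ∈ Finset.range (N + 1), (-1 : ℝ) ^ i / (2 * i + 1) := by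
  induction N with
  | zero => simp
  | succ n ih =>
    rw [Finset.sum_range_succ, ih, madhava_step, Finset.sum_range_succ (n := n + 1)]
    push_cast
    ring

/-- π/4 = 3/4 + 1/(3³-3) - 1/(5³-5) + 1/(7³-7) - ⋯ :
the sum over k ≥ 1 of (-1)^{k+1}/((2k+1)³ - (2k+1)) equals π/4 - 3/4. -/
theorem madhava_pi_series_cubes :
    HasSum (fun k : ℕ =>
      (-1 : ℝ) ^ ((k + 1) + 1) /
        ((2 * ((k : ℝ) + 1) + 1) ^ 3 - (2 * ((k : ℝ) + 1) + 1)))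
      (π / 4 - 3 / 4) := by
  have hnorm : ∀ k : ℕ, ‖(-1 : ℝ) ^ ((k + 1) + 1) /
      ((2 * ((k : ℝ) + 1) + 1) ^ 3 - (2 * ((k : ℝ) + 1) + 1))‖ ≤ 1 / ((k : ℝ) + 1) ^ 2 := by
    intro k
    have hpos : (0 : ℝ) < (2 * ((k : ℝ) + 1) + 1) ^ 3 - (2 * ((k : ℝ) + 1) + 1) := by
      nlinarith [Nat.cast_nonneg (α := ℝ) k, pow_nonneg (Nat.cast_nonneg (α := ℝ) k) 3, sq_nonneg ((k:ℝ))]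
    rw [norm_div, norm_pow, norm_neg, norm_one, one_pow, Real.norm_eq_abs, abs_of_pos hpos,
      div_le_div_iff₀ hpos (by positivity)]
    nlinarith [Nat.cast_nonneg (α := ℝ) k, pow_nonneg (Nat.cast_nonneg (α := ℝ) k) 3, sq_nonneg ((k:ℝ))]
  have hsum2 : Summable (fun k : ℕ => 1 / ((k : ℝ) + 1) ^ 2) := by
    have := (summable_nat_add_iff 1).mpr
      (Real.summable_one_div_nat_pow.mpr (show 1 < 2 by norm_num))
    exact this.congr fun n => by push_cast; ring
  rw [hasSum_iff_tendsto_nat_of_summable_norm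
    (Summable.of_nonneg_of_le (fun k => norm_nonneg _) hnorm hsum2)]
  have h1 : Tendsto (fun N : ℕ => ∑ i ∈ Finset.range (N + 1),
      (-1 : ℝ) ^ i / (2 * i + 1)) atTop (nhds (π / 4)) :=
    (Real.tendsto_sum_pi_div_four).comp (tendsto_add_atTop_nat 1)
  have h2 : Tendsto (fun N : ℕ => (-1 : ℝ) ^ N / (4 * ((N : ℝ) + 1))) atTop (nhds 0) := by
    refine squeeze_zero_norm (fun n => ?_) tendsto_one_div_add_atTop_nhds_zero_nat
    rw [norm_div, norm_pow, norm_neg, norm_one, one_pow, Real.norm_eq_abs,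
      abs_of_pos (by positivity), div_le_div_iff₀ (by positivity) (by positivity)]
    nlinarith [Nat.cast_nonneg (α := ℝ) n, pow_nonneg (Nat.cast_nonneg (α := ℝ) n) 3, sq_nonneg ((n:ℝ))]
  have h := (h1.sub h2).const_add (1/4 - 1 : ℝ)
  have heq : (π / 4 - 3/4 : ℝ) = 1/4 - 1 + (π/4 - 0) := by ring
  rw [heq]
  refine h.congr fun N => ?_
  rw [madhava_partial]
  ring
end

section
/- The sum over k ≥ 0 of (-1)^k · 4/((2k+1)^5 + 4(2k+1)) equals π/4; equivalently, π/4 = 4/(1^5+4·1) - 4/(3^5+4·3) + 4/(5^5+4·5) - 4/(7^5+4·7) + .... -/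
open Real Filter Finset
open scoped Topology

private noncomputable def cAux (k : ℕ) : ℝ := -((-1) ^ k * (k : ℝ) / (4 * (k : ℝ) ^ 2 + 1))

private lemma key (k : ℕ) :
    (-1 : ℝ) ^ k * 4 / ((2 * (k : ℝ) + 1) ^ 5 + 4 * (2 * (k : ℝ) + 1)) =
      (-1 : ℝ) ^ k / (2 * (k : ℝ) + 1) + (cAux k - cAux (k + 1)) := by
  have h1 : (2 * (k : ℝ) + 1) ^ 5 + 4 * (2 * (k : ℝ) + 1) > 0 := by positivity
  have h2 : (2 * (k : ℝ) + 1) > 0 := by positivity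
  have h3 : (4 * (k : ℝ) ^ 2 + 1) > 0 := by positivity
  have h4 : (4 * ((k : ℝ) + 1) ^ 2 + 1) > 0 := by positivity
  simp only [cAux, Nat.cast_add, Nat.cast_one, pow_succ]
  field_simp
  ring

private lemma summable_f :
    Summable (fun k : ℕ =>
      (-1 : ℝ) ^ k * 4 / ((2 * (k : ℝ) + 1) ^ 5 + 4 * (2 * (k : ℝ) + 1))) := by
  have hb : Summable (fun k : ℕ => 4 / ((k : ℝ) + 1) ^ 2) := by
    have := (summable_nat_add_iff (f := fun n : ℕ => 1 / (n : ℝ) ^ 2) 1).mpr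
      (Real.summable_one_div_nat_pow.mpr one_lt_two)
    have := this.mul_left 4
    simpa [div_eq_mul_inv, mul_assoc] using this
  apply Summable.of_norm_bounded hb
  intro k
  have hD : (0:ℝ) < (2 * (k : ℝ) + 1) ^ 5 + 4 * (2 * (k : ℝ) + 1) := by positivity
  have habs : ‖(-1 : ℝ) ^ k * 4 / ((2 * (k : ℝ) + 1) ^ 5 + 4 * (2 * (k : ℝ) + 1))‖
      = 4 / ((2 * (k : ℝ) + 1) ^ 5 + 4 * (2 * (k : ℝ) + 1)) := by
    rw [norm_div, norm_mul, norm_pow, norm_neg, norm_one, one_pow, one_mul,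
      Real.norm_ofNat, Real.norm_of_nonneg hD.le]
  rw [habs]
  apply div_le_div_of_nonneg_left (by norm_num) (by positivity)
  have e1 : ((k:ℝ)+1)^2 ≤ (2*(k:ℝ)+1)^2 := by nlinarith [Nat.cast_nonneg (α := ℝ) k]
  have e2 : (2*(k:ℝ)+1)^2 ≤ (2*(k:ℝ)+1)^5 := by
    apply pow_le_pow_right₀ (by nlinarith [Nat.cast_nonneg (α := ℝ) k]) (by norm_num)
  nlinarith [Nat.cast_nonneg (α := ℝ) k]

/-- π/4 = 4/(1⁵+4·1) - 4/(3⁵+4·3) + 4/(5⁵+4·5) - ⋯ :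
the sum over k ≥ 0 of (-1)^k · 4/((2k+1)⁵ + 4(2k+1)) equals π/4. -/
theorem madhava_pi_series_fifth_powers :
    HasSum (fun k : ℕ =>
      (-1 : ℝ) ^ k * 4 / ((2 * (k : ℝ) + 1) ^ 5 + 4 * (2 * (k : ℝ) + 1)))
      (π / 4) := by
  set f : ℕ → ℝ := fun k =>
    (-1 : ℝ) ^ k * 4 / ((2 * (k : ℝ) + 1) ^ 5 + 4 * (2 * (k : ℝ) + 1)) with hf
  have hs := summable_f
  have hsum : HasSum f (∑' k, f k) := hs.hasSum
  have htend := hsum.tendsto_sum_nat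
  -- partial sums equal Leibniz partial sums minus cAux n
  have hpart : ∀ n : ℕ, ∑ i ∈ range n, f i =
      (∑ i ∈ range n, (-1 : ℝ) ^ i / (2 * i + 1)) - cAux n := by
    intro n
    have : ∑ i ∈ range n, f i =
        ∑ i ∈ range n, ((-1 : ℝ) ^ i / (2 * i + 1) + (cAux i - cAux (i + 1))) := by
      exact Finset.sum_congr rfl fun i _ => key i
    rw [this, Finset.sum_add_distrib, Finset.sum_range_sub' cAux n]
    simp [cAux]
  have hc : Tendsto (fun n : ℕ => cAux n) atTop (𝓝 0) := by
    apply squeeze_zero_norm (a := fun n : ℕ => 1 / (n : ℝ)) ?_ tendsto_one_div_atTop_nhds_zero_nat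
    intro n
    have h3 : (0:ℝ) < 4 * (n : ℝ) ^ 2 + 1 := by positivity
    have : ‖cAux n‖ = (n : ℝ) / (4 * (n : ℝ) ^ 2 + 1) := by
      simp [cAux, norm_div, norm_mul, abs_of_nonneg h3.le, abs_of_nonneg (Nat.cast_nonneg (α := ℝ) n)]
    rw [this]
    rcases Nat.eq_zero_or_pos n with h | h
    · simp [h]
    · rw [div_le_div_iff₀ h3 (by positivity)]
      nlinarith [Nat.one_le_cast (α := ℝ).mpr h, sq_nonneg ((n:ℝ))]
  have htend2 : Tendsto (fun n : ℕ => ∑ i ∈ range n, f i) atTop (𝓝 (π / 4)) := by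
    have := (Real.tendsto_sum_pi_div_four).sub hc
    simpa [hpart] using this
  have : ∑' k, f k = π / 4 := tendsto_nhds_unique htend htend2
  rwa [this] at hsum
end

section
/- The sum over k ≥ 0 of (-1)^k / ((2k+1) · 3^k), multiplied by √12, equals π; that is, π = √12 · (1 - 1/(3·3) + 1/(5·3^2) - 1/(7·3^3) + ...). -/
open Real

/-- π = √12 · (1 - 1/(3·3) + 1/(5·3²) - 1/(7·3³) + ⋯) :
the sum over k ≥ 0 of √12 · (-1)^k/((2k+1)·3^k) equals π. -/
theorem madhava_sqrt12_series :
    HasSum (fun k : ℕ =>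
      Real.sqrt 12 * ((-1 : ℝ) ^ k / ((2 * (k : ℝ) + 1) * 3 ^ k))) π := by
  have h3 : (0:ℝ) < Real.sqrt 3 := Real.sqrt_pos.mpr (by norm_num)
  have hs3 : Real.sqrt 3 ^ 2 = 3 := Real.sq_sqrt (by norm_num)
  have hx : ‖(1 / Real.sqrt 3 : ℝ)‖ < 1 := by
    rw [Real.norm_eq_abs, abs_of_pos (by positivity), div_lt_one h3]
    nlinarith
  have h := (Real.hasSum_arctan hx).mul_left 6
  have harc : Real.arctan (1 / Real.sqrt 3) = π / 6 := by
    rw [← Real.tan_pi_div_six]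
    exact Real.arctan_tan (by linarith [Real.pi_pos]) (by linarith [Real.pi_pos])
  rw [harc] at h
  have h6 : 6 * (π / 6) = π := by ring
  rw [h6] at h
  convert h using 2 with k
  case e'_3 => rfl
  have h12 : Real.sqrt 12 = 2 * Real.sqrt 3 := by
    rw [show (12:ℝ) = 2^2 * 3 by norm_num, Real.sqrt_mul (by positivity),
      Real.sqrt_sq (by norm_num)]
  rw [h12]
  have hpow : (1 / Real.sqrt 3) ^ (2 * k + 1) = 1 / (3 ^ k * Real.sqrt 3) := by
    rw [div_pow, one_pow, pow_succ, pow_mul, hs3]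
  rw [hpow]
  push_cast
  field_simp
  linear_combination 2 * hs3
end

section
/- Let R > 0 and let θ₁ < θ₂ < θ₃ < θ₄ < θ₁ + 2π be real numbers, and let Pᵢ = (R·cos θᵢ, R·sin θᵢ) for i = 1,2,3,4 be the vertices of a convex quadrilateral inscribed in the circle of radius R centered at the origin of the Euclidean plane. Let a = dist(P₁,P₂), b = dist(P₂,P₃), c = dist(P₃,P₄), d = dist(P₄,P₁) be the side lengths. Then R² · (b+c+d−a)(a+c+d−b)(a+b+d−c)(a+b+c−d) = (ab+cd)(ac+bd)(ad+bc). -/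
open Real


private lemma key_poly (sa ca sb cb sc cc sd : ℝ)
    (h1 : sa ^ 2 + ca ^ 2 = 1) (h2 : sb ^ 2 + cb ^ 2 = 1) (h3 : sc ^ 2 + cc ^ 2 = 1)
    (hsd : sd = sa * cb * cc + ca * sb * cc + ca * cb * sc - sa * sb * sc) :
    (sb + sc + sd - sa) * (sa + sc + sd - sb) * (sa + sb + sd - sc) * (sa + sb + sc - sd) =
      4 * ((sa * sb + sc * sd) * (sa * sc + sb * sd) * (sa * sd + sb * sc)) := by
  subst hsd
  linear_combination ((2*cb*cb*sc*sc*sc*sc) + (-1*cb*cb*cb*cb*sc*sc*sc*sc) + (4*sb*cb*sc*sc*sc*cc) + (-4*sb*cb*cb*cb*sc*sc*sc*cc) + (2*sb*sb*sc*sc*cc*cc) + (2*sb*sb*cb*cb*sc*sc) + (-6*sb*sb*cb*cb*sc*sc*cc*cc) + (-4*sb*sb*cb*cb*sc*sc*sc*sc) + (4*sb*sb*sb*cb*sc*cc) + (-4*sb*sb*sb*cb*sc*cc*cc*cc) + (-8*sb*sb*sb*cb*sc*sc*sc*cc) + (2*sb*sb*sb*sb*cc*cc) + (-1*sb*sb*sb*sb*cc*cc*cc*cc)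 + (-4*sb*sb*sb*sb*sc*sc*cc*cc) + (-1*ca*ca*cb*cb*cb*cb*sc*sc*sc*sc) + (-4*ca*ca*sb*cb*cb*cb*sc*sc*sc*cc) + (-6*ca*ca*sb*sb*cb*cb*sc*sc*cc*cc) + (-4*ca*ca*sb*sb*sb*cb*sc*cc*cc*cc) + (-1*ca*ca*sb*sb*sb*sb*cc*cc*cc*cc) + (-4*sa*ca*cb*cb*cb*cb*sc*sc*sc*cc) + (-12*sa*ca*sb*cb*cb*cb*sc*sc*cc*cc) + (-12*sa*ca*sb*sb*cb*cb*sc*cc*cc*cc) + (-4*sa*ca*sb*sb*sb*cb*cc*cc*cc*cc) + (2*sa*sa*cb*cb*sc*sc) + (-4*sa*sa*cb*cb*sc*sc*sc*sc) + (-6*sa*sa*cb*cb*cb*cb*sc*sc*cc*cc) + (1*sa*sa*cb*cb*cb*cb*sc*sc*sc*sc) + (4*sa*sa*sb*cb*sc*cc) + (-8*sa*sa*sb*cb*sc*sc*sc*cc) + (-12*sa*sa*sb*cb*cb*cb*sc*cc*cc*cc) + (4*sa*sa*sb*cb*cb*cb*sc*sc*sc*cc) + (2*sa*sa*sb*sb*cc*cc)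 + (-4*sa*sa*sb*sb*sc*sc*cc*cc) + (-6*sa*sa*sb*sb*cb*cb*cc*cc*cc*cc) + (-4*sa*sa*sb*sb*cb*cb*sc*sc) + (6*sa*sa*sb*sb*cb*cb*sc*sc*cc*cc) + (6*sa*sa*sb*sb*cb*cb*sc*sc*sc*sc) + (-8*sa*sa*sb*sb*sb*cb*sc*cc) + (4*sa*sa*sb*sb*sb*cb*sc*cc*cc*cc) + (12*sa*sa*sb*sb*sb*cb*sc*sc*sc*cc) + (-4*sa*sa*sb*sb*sb*sb*cc*cc) + (1*sa*sa*sb*sb*sb*sb*cc*cc*cc*cc) + (6*sa*sa*sb*sb*sb*sb*sc*sc*cc*cc)) * h1 + ((1*sc*sc*sc*sc) + (-1*cb*cb*sc*sc*sc*sc) + (-4*sb*cb*sc*sc*sc*cc) + (2*sb*sb*sc*sc) + (-6*sb*sb*sc*sc*cc*cc) + (-3*sb*sb*sc*sc*sc*sc) + (-4*sa*ca*cb*cb*sc*sc*sc*cc) + (-12*sa*ca*sb*cb*sc*sc*cc*cc) + (4*sa*ca*sb*sb*sc*cc) + (-12*sa*ca*sb*sb*sc*cc*cc*cc) + (-4*sa*ca*sb*sb*sc*sc*sc*cc)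 + (2*sa*sa*sc*sc) + (-4*sa*sa*sc*sc*cc*cc) + (-4*sa*sa*sc*sc*sc*sc) + (-6*sa*sa*cb*cb*sc*sc*cc*cc) + (2*sa*sa*cb*cb*sc*sc*sc*sc) + (-12*sa*sa*sb*cb*sc*cc*cc*cc) + (8*sa*sa*sb*cb*sc*sc*sc*cc) + (2*sa*sa*sb*sb*cc*cc) + (-6*sa*sa*sb*sb*cc*cc*cc*cc) + (-6*sa*sa*sb*sb*sc*sc) + (14*sa*sa*sb*sb*sc*sc*cc*cc) + (8*sa*sa*sb*sb*sc*sc*sc*sc) + (4*sa*sa*sa*ca*sc*cc) + (-4*sa*sa*sa*ca*sc*cc*cc*cc) + (-4*sa*sa*sa*ca*sc*sc*sc*cc) + (-4*sa*sa*sa*ca*cb*cb*sc*cc*cc*cc) + (4*sa*sa*sa*ca*cb*cb*sc*sc*sc*cc) + (-4*sa*sa*sa*ca*sb*cb*cc*cc*cc*cc) + (12*sa*sa*sa*ca*sb*cb*sc*sc*cc*cc) + (-8*sa*sa*sa*ca*sb*sb*sc*cc) + (16*sa*sa*sa*ca*sb*sb*sc*cc*cc*cc) + (8*sa*sa*sa*ca*sb*sb*sc*sc*sc*cc)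 + (2*sa*sa*sa*sa*cc*cc) + (-1*sa*sa*sa*sa*cc*cc*cc*cc) + (-2*sa*sa*sa*sa*sc*sc) + (2*sa*sa*sa*sa*sc*sc*cc*cc) + (3*sa*sa*sa*sa*sc*sc*sc*sc) + (-1*sa*sa*sa*sa*cb*cb*cc*cc*cc*cc) + (6*sa*sa*sa*sa*cb*cb*sc*sc*cc*cc) + (-1*sa*sa*sa*sa*cb*cb*sc*sc*sc*sc) + (12*sa*sa*sa*sa*sb*cb*sc*cc*cc*cc) + (-4*sa*sa*sa*sa*sb*cb*sc*sc*sc*cc) + (-4*sa*sa*sa*sa*sb*sb*cc*cc) + (7*sa*sa*sa*sa*sb*sb*cc*cc*cc*cc) + (4*sa*sa*sa*sa*sb*sb*sc*sc) + (-6*sa*sa*sa*sa*sb*sb*sc*sc*cc*cc) + (-5*sa*sa*sa*sa*sb*sb*sc*sc*sc*sc)) * h2 + ((-4*sb*sb*sc*sc) + (-4*sb*sb*sb*cb*sc*cc) + (1*sb*sb*sb*sb) + (-1*sb*sb*sb*sb*cc*cc) + (3*sb*sb*sb*sb*sc*sc) + (-8*sa*ca*sb*cb*sc*sc) + (-12*sa*ca*sb*sb*sc*cc)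 + (-4*sa*ca*sb*sb*sb*cb*cc*cc) + (8*sa*ca*sb*sb*sb*cb*sc*sc) + (12*sa*ca*sb*sb*sb*sb*sc*cc) + (-4*sa*sa*sc*sc) + (-12*sa*sa*sb*cb*sc*cc) + (-2*sa*sa*sb*sb) + (-6*sa*sa*sb*sb*cc*cc) + (18*sa*sa*sb*sb*sc*sc) + (20*sa*sa*sb*sb*sb*cb*sc*cc) + (8*sa*sa*sb*sb*sb*sb*cc*cc) + (-12*sa*sa*sb*sb*sb*sb*sc*sc) + (-4*sa*sa*sa*ca*sc*cc) + (-4*sa*sa*sa*ca*sb*cb*cc*cc) + (8*sa*sa*sa*ca*sb*cb*sc*sc) + (20*sa*sa*sa*ca*sb*sb*sc*cc) + (8*sa*sa*sa*ca*sb*sb*sb*cb*cc*cc) + (-8*sa*sa*sa*ca*sb*sb*sb*cb*sc*sc) + (-16*sa*sa*sa*ca*sb*sb*sb*sb*sc*cc) + (1*sa*sa*sa*sa) + (-1*sa*sa*sa*sa*cc*cc) + (3*sa*sa*sa*sa*sc*sc) + (12*sa*sa*sa*sa*sb*cb*sc*cc) + (8*sa*sa*sa*sa*sb*sb*cc*cc)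 + (-12*sa*sa*sa*sa*sb*sb*sc*sc) + (-16*sa*sa*sa*sa*sb*sb*sb*cb*sc*cc) + (-8*sa*sa*sa*sa*sb*sb*sb*sb*cc*cc) + (8*sa*sa*sa*sa*sb*sb*sb*sb*sc*sc)) * h3
private lemma chord (R θ θ' : ℝ) (hR : 0 ≤ R) (h1 : θ < θ') (h2 : θ' < θ + 2 * π) :
    dist ((WithLp.equiv 2 (Fin 2 → ℝ)).symm ![R * Real.cos θ, R * Real.sin θ])
      ((WithLp.equiv 2 (Fin 2 → ℝ)).symm ![R * Real.cos θ', R * Real.sin θ']) =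
      2 * R * Real.sin ((θ' - θ) / 2) := by
  have hs : 0 ≤ Real.sin ((θ' - θ) / 2) :=
    Real.sin_nonneg_of_nonneg_of_le_pi (by linarith) (by linarith [Real.pi_pos])
  rw [EuclideanSpace.dist_eq]
  simp only [WithLp.equiv_symm_apply, PiLp.toLp_apply, Matrix.cons_val_zero, Matrix.cons_val_one,
    Matrix.head_cons, Fin.sum_univ_two, Real.dist_eq, sq_abs]
  have hp := Real.sin_sq_add_cos_sq ((θ' - θ) / 2)
  have h' := Real.cos_sq ((θ' - θ) / 2)
  rw [show 2 * ((θ' - θ) / 2) = θ' - θ by ring] at h'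
  have hc := Real.cos_sub θ' θ
  have : (R * Real.cos θ - R * Real.cos θ') ^ 2 + (R * Real.sin θ - R * Real.sin θ') ^ 2
      = (2 * R * Real.sin ((θ' - θ) / 2)) ^ 2 := by
    linear_combination (-4 * R ^ 2) * hp + (4 * R ^ 2) * h' + (2 * R ^ 2) * hc + R ^ 2 * Real.sin_sq_add_cos_sq θ + R ^ 2 * Real.sin_sq_add_cos_sq θ'
  rw [this, Real.sqrt_sq (by positivity)]

/-- Parameśvara's circumradius formula for a convex cyclic quadrilateral
(in squared, cleared-denominator form): if P₁, P₂, P₃, P₄ are points on the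
circle of radius R > 0 centered at the origin of the Euclidean plane, taken
at angles θ₁ < θ₂ < θ₃ < θ₄ < θ₁ + 2π, with side lengths a, b, c, d, then
R²·(b+c+d−a)(a+c+d−b)(a+b+d−c)(a+b+c−d) = (ab+cd)(ac+bd)(ad+bc). -/
theorem paramesvara_circumradius (R : ℝ) (hR : 0 < R)
    (θ₁ θ₂ θ₃ θ₄ : ℝ)
    (h12 : θ₁ < θ₂) (h23 : θ₂ < θ₃) (h34 : θ₃ < θ₄) (h41 : θ₄ < θ₁ + 2 * π)
    (P₁ P₂ P₃ P₄ : EuclideanSpace ℝ (Fin 2))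
    (hP₁ : P₁ = (WithLp.equiv 2 (Fin 2 → ℝ)).symm ![R * Real.cos θ₁, R * Real.sin θ₁])
    (hP₂ : P₂ = (WithLp.equiv 2 (Fin 2 → ℝ)).symm ![R * Real.cos θ₂, R * Real.sin θ₂])
    (hP₃ : P₃ = (WithLp.equiv 2 (Fin 2 → ℝ)).symm ![R * Real.cos θ₃, R * Real.sin θ₃])
    (hP₄ : P₄ = (WithLp.equiv 2 (Fin 2 → ℝ)).symm ![R * Real.cos θ₄, R * Real.sin θ₄])
    (a b c d : ℝ)
    (ha : a = dist P₁ P₂) (hb : b = dist P₂ P₃)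
    (hc : c = dist P₃ P₄) (hd : d = dist P₄ P₁) :
    R ^ 2 * ((b + c + d - a) * (a + c + d - b) * (a + b + d - c) * (a + b + c - d)) =
      (a * b + c * d) * (a * c + b * d) * (a * d + b * c) := by
  have hR' : (0 : ℝ) ≤ R := hR.le
  set α := (θ₂ - θ₁) / 2 with hα
  set β := (θ₃ - θ₂) / 2 with hβ
  set γ := (θ₄ - θ₃) / 2 with hγ
  set δ := (θ₁ + 2 * π - θ₄) / 2 with hδdef
  have hA : a = 2 * R * Real.sin α := by
    rw [ha, hP₁, hP₂]; exact chord R θ₁ θ₂ hR' h12 (by linarith)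
  have hB : b = 2 * R * Real.sin β := by
    rw [hb, hP₂, hP₃]; exact chord R θ₂ θ₃ hR' h23 (by linarith)
  have hC : c = 2 * R * Real.sin γ := by
    rw [hc, hP₃, hP₄]; exact chord R θ₃ θ₄ hR' h34 (by linarith)
  have hD : d = 2 * R * Real.sin δ := by
    rw [hd, hP₄, hP₁, ← Real.cos_add_two_pi θ₁, ← Real.sin_add_two_pi θ₁]
    have := chord R θ₄ (θ₁ + 2 * π) hR' h41 (by linarith)
    rw [this]
  have hsd : Real.sin δ = Real.sin α * Real.cos β * Real.cos γ +
      Real.cos α * Real.sin β * Real.cos γ + Real.cos α * Real.cos β * Real.sin γ -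
      Real.sin α * Real.sin β * Real.sin γ := by
    have hδπ : δ = π - (α + β + γ) := by rw [hα, hβ, hγ, hδdef]; ring
    rw [hδπ, Real.sin_pi_sub, Real.sin_add, Real.sin_add, Real.cos_add]; ring
  have K := key_poly (Real.sin α) (Real.cos α) (Real.sin β) (Real.cos β)
    (Real.sin γ) (Real.cos γ) (Real.sin δ)
    (Real.sin_sq_add_cos_sq α) (Real.sin_sq_add_cos_sq β) (Real.sin_sq_add_cos_sq γ) hsd
  rw [hA, hB, hC, hD]
  linear_combination (16 * R ^ 6) * K
end
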